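/- arXiv:2410.02359 — 2 statements merged into one kernel-verified Lean document; each statement's English description precedes it below -/
import Mathlib

section
/- Let a = (a_0,...,a_n) be a strictly decreasing sequence of non-negative integers and let b = (b_0,...,b_r) be a subsequence of a (r ≤ n). Then every monomial of the Schur polynomial σ_b(x_0,...,x_r) is divisible by some monomial of the specialized Schur polynomial σ_a(x_0,...,x_r,1,...,1) obtained by setting the last n − r variables equal to 1. -/
/-!
A semistandard tableau `T` of shape `μb` with entries in `{0, …, r}` extends to a semistandard
tableau `S` of shape `μa` with entries in `{0, …, n}`: keep `T` on the cells of `μb` and write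
`r + 1 + (i - colLen_b j)` into a cell `(i, j)` outside `μb`. Setting `x_{r+1}, …, x_n` to `1`
turns `x^S` into the product of the `x_k` over the entries `k ≤ r` of `S`; these sit in cells of
`μa ∩ μb` and agree with `T` there, so the specialized monomial divides `x^T`. The new entries do
not exceed `n` because row `i` of `μa` is no longer than row `i - (n - r)` of `μb`, which holds
since `b` is a subsequence of the decreasing sequence `a`.
-/

open MvPolynomial
open Classical

/-- The Schur polynomial in variables `x_0, …, x_n` associated to the Young
diagram `μ`, defined as a sum over semistandard fillings with entries in
`{0, …, n}`. -/
noncomputable def schurPoly (n : ℕ) (μ : YoungDiagram) :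
    MvPolynomial (Fin (n + 1)) ℤ :=
  ∑ T ∈ Finset.univ.filter
      (fun T : μ.cells → Fin (n + 1) =>
        (∀ c c' : μ.cells, (c : ℕ × ℕ).1 = (c' : ℕ × ℕ).1 →
          (c : ℕ × ℕ).2 ≤ (c' : ℕ × ℕ).2 → T c ≤ T c') ∧
        (∀ c c' : μ.cells, (c : ℕ × ℕ).2 = (c' : ℕ × ℕ).2 →
          (c : ℕ × ℕ).1 < (c' : ℕ × ℕ).1 → T c < T c')),
    ∏ c : μ.cells, X (T c)

/-- Substitution of `1` for the last `n - r` variables (variables with index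
`> r` are sent to `1`, the others to themselves). -/
noncomputable def specializeLast (n r : ℕ) :
    MvPolynomial (Fin (n + 1)) ℤ →ₐ[ℤ] MvPolynomial (Fin (r + 1)) ℤ :=
  aeval (fun i : Fin (n + 1) =>
    if h : (i : ℕ) < r + 1 then X ⟨(i : ℕ), h⟩ else 1)

lemma StrictMono.val_add_sub_le {m p : ℕ} {f : Fin m → Fin p} (hf : StrictMono f) (k : Fin m) :
    (f k : ℕ) + (m - k) ≤ p := by
  have := Finset.card_le_card_of_injOn f (s := Finset.Ici k) (t := Finset.Ici (f k))
    (fun l hl => by simpa using hf.monotone (Finset.mem_Ici.1 hl)) hf.injective.injOn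
  simp only [Fin.card_Ici] at this
  have := (f k).is_lt
  omega

lemma MvPolynomial.mem_support_sum_monomial_one {R σ α : Type*} [CommSemiring R] [CharZero R]
    (s : Finset α) (w : α → σ →₀ ℕ) (d : σ →₀ ℕ) :
    d ∈ (∑ a ∈ s, monomial (w a) (1 : R)).support ↔ ∃ a ∈ s, w a = d := by
  rw [mem_support_iff, coeff_sum]
  simp [coeff_monomial, Finset.sum_boole, Finset.filter_eq_empty_iff]

lemma Finset.sum_subtype_le_sum_subtype {α M : Type*} [AddCommMonoid M] [PartialOrder M]
    [IsOrderedAddMonoid M] [CanonicallyOrderedAdd M] {s t : Finset α} (f : s → M) (g : t → M)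
    (h : ∀ x : s, f x ≠ 0 → ∃ hx : (x : α) ∈ t, f x ≤ g ⟨x, hx⟩) :
    ∑ x, f x ≤ ∑ x, g x := by
  set G : α → M := fun a => if ha : a ∈ t then g ⟨a, ha⟩ else 0
  have hfG : ∀ x : s, f x ≤ G x := fun x => by
    by_cases hfx : f x = 0
    · simp [hfx]
    · obtain ⟨hx, hle⟩ := h x hfx
      simpa [G, hx] using hle
  calc ∑ x, f x ≤ ∑ x : s, G x := Finset.sum_le_sum fun x _ => hfG x
    _ = ∑ a ∈ s, G a := Finset.sum_coe_sort s G
    _ ≤ ∑ a ∈ s ∪ t, G a :=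
      Finset.sum_le_sum_of_subset_of_nonneg Finset.subset_union_left fun _ _ _ => zero_le
    _ = ∑ a ∈ t, G a := (Finset.sum_subset Finset.subset_union_right fun _ _ ha => dif_neg ha).symm
    _ = ∑ x, g x := by rw [← Finset.sum_coe_sort t G]; simp [G]

namespace YoungDiagram

def IsSemistandard {α : Type*} [Preorder α] (μ : YoungDiagram) (T : μ.cells → α) : Prop :=
  (∀ c c' : μ.cells, (c : ℕ × ℕ).1 = (c' : ℕ × ℕ).1 →
    (c : ℕ × ℕ).2 ≤ (c' : ℕ × ℕ).2 → T c ≤ T c') ∧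
  (∀ c c' : μ.cells, (c : ℕ × ℕ).2 = (c' : ℕ × ℕ).2 →
    (c : ℕ × ℕ).1 < (c' : ℕ × ℕ).1 → T c < T c')

end YoungDiagram

lemma schurPoly_eq_sum_monomial (n : ℕ) (μ : YoungDiagram) :
    schurPoly n μ = ∑ T ∈ Finset.univ.filter (μ.IsSemistandard (α := Fin (n + 1))),
      monomial (∑ c, Finsupp.single (T c) 1) 1 := by
  refine Finset.sum_congr (by ext; simp only [Finset.mem_filter]; rfl) fun T _ => ?_
  exact (monomial_sum_one _ _).symm

lemma mem_support_schurPoly_iff {n : ℕ} {μ : YoungDiagram} {d : Fin (n + 1) →₀ ℕ} :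
    d ∈ (schurPoly n μ).support ↔
      ∃ T : μ.cells → Fin (n + 1), μ.IsSemistandard T ∧ ∑ c, Finsupp.single (T c) 1 = d := by
  simp only [schurPoly_eq_sum_monomial, mem_support_sum_monomial_one, Finset.mem_filter,
    Finset.mem_univ, true_and]

noncomputable def truncSingle {n : ℕ} (r : ℕ) (i : Fin (n + 1)) : Fin (r + 1) →₀ ℕ :=
  if h : (i : ℕ) < r + 1 then Finsupp.single ⟨i, h⟩ 1 else 0

lemma specializeLast_X {n : ℕ} (r : ℕ) (i : Fin (n + 1)) :
    specializeLast n r (X i) = monomial (truncSingle r i) 1 := by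
  rw [specializeLast, aeval_X, truncSingle]
  split_ifs <;> rfl

lemma sum_truncSingle_mem_support {n r : ℕ} {μ : YoungDiagram} {S : μ.cells → Fin (n + 1)}
    (hS : μ.IsSemistandard S) :
    ∑ c, truncSingle r (S c) ∈ (specializeLast n r (schurPoly n μ)).support := by
  rw [schurPoly, map_sum]
  simp only [map_prod, specializeLast_X, ← monomial_sum_one]
  exact (mem_support_sum_monomial_one _ _ _).2 ⟨S, Finset.mem_filter.2 ⟨Finset.mem_univ _, hS⟩, rfl⟩

namespace YoungDiagram

variable {ν : YoungDiagram} {r : ℕ} {T : ν.cells → Fin (r + 1)}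

def extendFilling (ν : YoungDiagram) (T : ν.cells → Fin (r + 1)) (p : ℕ × ℕ) : ℕ :=
  if hp : p ∈ ν then T ⟨p, (ν.mem_cells _).2 hp⟩ else r + 1 + (p.1 - ν.colLen p.2)

lemma extendFilling_of_mem {p : ℕ × ℕ} (hp : p ∈ ν) :
    extendFilling ν T p = T ⟨p, (ν.mem_cells _).2 hp⟩ :=
  dif_pos hp

lemma extendFilling_of_not_mem {i j : ℕ} (h : (i, j) ∉ ν) :
    extendFilling ν T (i, j) = r + 1 + (i - ν.colLen j) :=
  dif_neg h

lemma extendFilling_lt_iff {p : ℕ × ℕ} : extendFilling ν T p < r + 1 ↔ p ∈ ν := by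
  obtain ⟨i, j⟩ := p
  by_cases hp : (i, j) ∈ ν
  · simp [extendFilling_of_mem hp, hp, (T _).is_lt]
  · rw [extendFilling_of_not_mem hp]
    simp only [hp, iff_false]
    omega

lemma IsSemistandard.extendFilling_le (hT : ν.IsSemistandard T) {i j j' : ℕ} (hj : j ≤ j') :
    extendFilling ν T (i, j) ≤ extendFilling ν T (i, j') := by
  by_cases h' : (i, j') ∈ ν
  · have h : (i, j) ∈ ν := ν.up_left_mem le_rfl hj h'
    rw [extendFilling_of_mem h, extendFilling_of_mem h']
    exact hT.1 ⟨_, (ν.mem_cells _).2 h⟩ ⟨_, (ν.mem_cells _).2 h'⟩ rfl hj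
  · rw [extendFilling_of_not_mem h']
    by_cases h : (i, j) ∈ ν
    · have := (extendFilling_lt_iff (T := T)).2 h
      omega
    · have := ν.colLen_anti _ _ hj
      rw [extendFilling_of_not_mem h]
      omega

lemma IsSemistandard.extendFilling_lt (hT : ν.IsSemistandard T) {i i' j : ℕ} (hi : i < i') :
    extendFilling ν T (i, j) < extendFilling ν T (i', j) := by
  by_cases h' : (i', j) ∈ ν
  · have h : (i, j) ∈ ν := ν.up_left_mem hi.le le_rfl h'
    rw [extendFilling_of_mem h, extendFilling_of_mem h']
    exact hT.2 ⟨_, (ν.mem_cells _).2 h⟩ ⟨_, (ν.mem_cells _).2 h'⟩ rfl hi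
  · rw [extendFilling_of_not_mem h']
    by_cases h : (i, j) ∈ ν
    · have := (extendFilling_lt_iff (T := T)).2 h
      omega
    · have := mt mem_iff_lt_colLen.2 h
      rw [extendFilling_of_not_mem h]
      omega

theorem IsSemistandard.exists_extension {n : ℕ} {μ : YoungDiagram} (hT : ν.IsSemistandard T)
    (hr : r ≤ n) (hbound : ∀ i j, (i, j) ∈ μ → (i, j) ∉ ν → r + 1 + (i - ν.colLen j) ≤ n) :
    ∃ S : μ.cells → Fin (n + 1), μ.IsSemistandard S ∧
      ∑ c, truncSingle r (S c) ≤ ∑ c, Finsupp.single (T c) 1 := by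
  have hle : ∀ c : μ.cells, extendFilling ν T c < n + 1 := fun ⟨(i, j), hc⟩ => by
    change extendFilling ν T (i, j) < n + 1
    by_cases h : (i, j) ∈ ν
    · have := (extendFilling_lt_iff (T := T)).2 h
      omega
    · rw [extendFilling_of_not_mem h]
      have := hbound i j ((μ.mem_cells _).1 hc) h
      omega
  refine ⟨fun c => ⟨extendFilling ν T c, hle c⟩, ⟨?_, ?_⟩, ?_⟩
  · rintro ⟨⟨i, j⟩, _⟩ ⟨⟨_, j'⟩, _⟩ rfl hj
    exact hT.extendFilling_le hj
  · rintro ⟨⟨i, j⟩, _⟩ ⟨⟨i', _⟩, _⟩ rfl hi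
    exact hT.extendFilling_lt hi
  · refine Finset.sum_subtype_le_sum_subtype _ _ fun c hc => ?_
    have hlt : extendFilling ν T c < r + 1 := by
      by_contra h
      exact hc (dif_neg h)
    have hν : (c : ℕ × ℕ) ∈ ν := extendFilling_lt_iff.1 hlt
    refine ⟨(ν.mem_cells _).2 hν, le_of_eq ?_⟩
    simp only [truncSingle, dif_pos hlt]
    congr 1
    ext
    exact extendFilling_of_mem hν

end YoungDiagram

section Subsequence

variable {n r : ℕ} {a : Fin (n + 1) → ℕ} {ι : Fin (r + 1) → Fin (n + 1)} {μa μb : YoungDiagram}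

lemma rowLen_le_rowLen_of_strictMono (hr : r ≤ n) (ha : StrictAnti a) (hι : StrictMono ι)
    (hμa : ∀ i : Fin (n + 1), μa.rowLen i = a i - (n - (i : ℕ)))
    (hμb : ∀ i : Fin (r + 1), μb.rowLen i = a (ι i) - (r - (i : ℕ))) (k : Fin (r + 1)) :
    μa.rowLen (k + (n - r)) ≤ μb.rowLen k := by
  have hk : (k : ℕ) + (n - r) < n + 1 := by omega
  have hιk := hι.val_add_sub_le k
  have hak : a ⟨k + (n - r), hk⟩ ≤ a (ι k) := ha.antitone (Fin.le_def.2 (show (ι k : ℕ) ≤ k + (n - r) by omega))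
  have hrow_a : μa.rowLen (k + (n - r)) = a ⟨k + (n - r), hk⟩ - (n - (k + (n - r))) :=
    hμa ⟨k + (n - r), hk⟩
  rw [hrow_a, hμb k]
  omega

lemma add_sub_colLen_le_of_strictMono (hr : r ≤ n) (ha : StrictAnti a) (hι : StrictMono ι)
    (hμa : ∀ i : Fin (n + 1), μa.rowLen i = a i - (n - (i : ℕ)))
    (hμa' : ∀ m : ℕ, n + 1 ≤ m → μa.rowLen m = 0)
    (hμb : ∀ i : Fin (r + 1), μb.rowLen i = a (ι i) - (r - (i : ℕ)))
    {i j : ℕ} (hp : (i, j) ∈ μa) (hnp : (i, j) ∉ μb) :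
    r + 1 + (i - μb.colLen j) ≤ n := by
  have hrow := YoungDiagram.mem_iff_lt_rowLen.1 hp
  have hin : i ≤ n := by
    by_contra h
    rw [hμa' i (by omega)] at hrow
    omega
  have hcol : μb.colLen j ≤ i := not_lt.1 (mt YoungDiagram.mem_iff_lt_colLen.2 hnp)
  rcases lt_or_ge i (n - r) with hi | hi
  · omega
  · have hk : i - (n - r) < r + 1 := by omega
    have hlen := rowLen_le_rowLen_of_strictMono hr ha hι hμa hμb ⟨i - (n - r), hk⟩
    simp only [show i - (n - r) + (n - r) = i by omega] at hlen
    have hmem : (i - (n - r), j) ∈ μb := YoungDiagram.mem_iff_lt_rowLen.2 (by omega)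
    have := YoungDiagram.mem_iff_lt_colLen.1 hmem
    omega

end Subsequence

theorem stmt3_general (n r : ℕ) (hr : r ≤ n) (a : Fin (n + 1) → ℕ)
    (ha : ∀ i j : Fin (n + 1), i < j → a j < a i)
    (ι : Fin (r + 1) → Fin (n + 1)) (hι : StrictMono ι)
    (μa : YoungDiagram)
    (hμa : ∀ i : Fin (n + 1), μa.rowLen i = a i - (n - (i : ℕ)))
    (hμa' : ∀ m : ℕ, n + 1 ≤ m → μa.rowLen m = 0)
    (μb : YoungDiagram)
    (hμb : ∀ i : Fin (r + 1), μb.rowLen i = a (ι i) - (r - (i : ℕ))) :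
    ∀ d ∈ (schurPoly r μb).support,
      ∃ e ∈ (specializeLast n r (schurPoly n μa)).support, e ≤ d := by
  intro d hd
  obtain ⟨T, hT, rfl⟩ := mem_support_schurPoly_iff.1 hd
  obtain ⟨S, hS, hST⟩ := hT.exists_extension hr fun i j hp hnp =>
    add_sub_colLen_le_of_strictMono hr ha hι hμa hμa' hμb hp hnp
  exact ⟨_, sum_truncSingle_mem_support hS, hST⟩

/-- If `b` is a subsequence of the strictly decreasing sequence `a`, then every
monomial of `σ_b(x_0,…,x_r)` is divisible by some monomial of
`σ_a(x_0,…,x_r,1,…,1)`. -/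
theorem stmt3 (n r : ℕ) (hr : r ≤ n) (a : Fin (n + 1) → ℕ)
    (ha : ∀ i j : Fin (n + 1), i < j → a j < a i)
    (ι : Fin (r + 1) → Fin (n + 1)) (hι : StrictMono ι)
    (μa : YoungDiagram)
    (hμa : ∀ i : Fin (n + 1), μa.rowLen i = a i - (n - (i : ℕ)))
    (hμa' : ∀ m : ℕ, n + 1 ≤ m → μa.rowLen m = 0)
    (μb : YoungDiagram)
    (hμb : ∀ i : Fin (r + 1), μb.rowLen i = a (ι i) - (r - (i : ℕ)))
    (hμb' : ∀ m : ℕ, r + 1 ≤ m → μb.rowLen m = 0) :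
    ∀ d ∈ (schurPoly r μb).support,
      ∃ e ∈ (specializeLast n r (schurPoly n μa)).support, e ≤ d :=
  stmt3_general n r hr a ha ι hι μa hμa hμa' μb hμb
end

section
/- Let C be an irreducible non-singular affine curve over ℝ, S ⊆ C(ℝ) a compact semialgebraic set without isolated points, V ⊆ ℝ[C] a subspace of dimension n+1, and P = P_{V,S} = {f ∈ V : f|_S ≥ 0}. For 0 ≠ f ∈ P, the linear span of the supporting face F_f of f in P equals V_f = {g ∈ V : ord_ξ(g) ≥ ord_ξ(f) for all ξ ∈ S}. -/
/-- `ordGe d f η m` expresses `ord_η(f) ≥ m`: the first `m` iterated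
`d/dt`-derivatives of `f` vanish at the point `η`. -/
def ordGe {A : Type} [CommRing A] [Algebra ℝ A] (d : Module.End ℝ A)
    (f : A) (η : A →ₐ[ℝ] ℝ) (m : ℕ) : Prop :=
  ∀ s < m, η ((d ^ s) f) = 0

/-!
At a real point `η` the Kähler condition makes `τ = t - t(η)` generate the maximal ideal
`𝔪 = ker η` modulo `𝔪²`, so by Nakayama it generates `𝔪` after inverting some `r` with
`r(η) = 1`. Hence `ord_η(x) ≥ k` (vanishing of the first `k` derivatives) means `x ∈ 𝔪ᵏ`,
and every `x ∈ 𝔪ᵏ \ 𝔪ᵏ⁺¹` factors as `r^(k+1) x = τᵏ q` with `q(η) ≠ 0`.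

If `0 ≤ p ≤ f` on `S` and `ord_η p < ord_η f`, these factorizations give `f = o(p)` near `η`,
while `p = O(f)`; since `η` is not isolated in `S` and `τ` has finitely many zeros (dimension
one), `p` does not vanish identically near `η`, a contradiction. Conversely, if
`ord g ≥ ord f` on `S`, the factorizations give `g = O(f)` near every point of `S`, so by
compactness `|g| ≤ C f` on `S`, and `g = C ((f + g/C)/2 - (f - g/C)/2)` is a difference of
elements of the face.
-/

open Filter Topology Asymptotics

namespace Ideal

variable {R : Type*} [CommRing R] {I : Ideal R} {τ : R}

theorem pow_le_span_pow_sup_pow_succ (hτ : τ ∈ I) (hI : I ≤ span {τ} ⊔ I ^ 2) (k : ℕ) :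
    I ^ k ≤ span {τ ^ k} ⊔ I ^ (k + 1) := by
  induction k with
  | zero => simp
  | succ k ih =>
    calc I ^ (k + 1) = I ^ k * I := pow_succ I k
      _ ≤ (span {τ ^ k} ⊔ I ^ (k + 1)) * (span {τ} ⊔ I ^ 2) := mul_mono ih hI
      _ ≤ span {τ ^ (k + 1)} ⊔ I ^ (k + 2) := by
        simp only [sup_mul, mul_sup, sup_le_iff]
        refine ⟨⟨?_, ?_⟩, ?_, ?_⟩
        · rw [span_singleton_mul_span_singleton, ← pow_succ]
          exact le_sup_left
        all_goals refine le_sup_of_le_right ?_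
        · calc I ^ (k + 1) * span {τ} ≤ I ^ (k + 1) * I :=
                mul_mono_right ((span_singleton_le_iff_mem _).mpr hτ)
            _ = I ^ (k + 1 + 1) := (pow_succ I (k + 1)).symm
        · calc span {τ ^ k} * I ^ 2 ≤ I ^ k * I ^ 2 :=
                mul_mono_left ((span_singleton_le_iff_mem _).mpr (pow_mem_pow hτ k))
            _ = I ^ (k + 1 + 1) := by rw [← pow_add]
        · calc I ^ (k + 1) * I ^ 2 = I ^ (k + 1 + 2) := (pow_add I _ _).symm
            _ ≤ I ^ (k + 1 + 1) := pow_le_pow_right (by omega)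

theorem exists_sub_pow_mul_mem_pow_succ (hτ : τ ∈ I) (hI : I ≤ span {τ} ⊔ I ^ 2) {k : ℕ}
    {x : R} (hx : x ∈ I ^ k) : ∃ a, x - τ ^ k * a ∈ I ^ (k + 1) := by
  obtain ⟨y, hy, z, hz, rfl⟩ := Submodule.mem_sup.mp (pow_le_span_pow_sup_pow_succ hτ hI k hx)
  obtain ⟨a, rfl⟩ := mem_span_singleton.mp hy
  exact ⟨a, by simpa using hz⟩

theorem mem_pow_succ_of_sub_pow_mul_mem (hτ : τ ∈ I) {k : ℕ} {x a : R}
    (hx : x - τ ^ k * a ∈ I ^ (k + 1)) (ha : a ∈ I) : x ∈ I ^ (k + 1) := by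
  have : τ ^ k * a ∈ I ^ (k + 1) := pow_succ I k ▸ mul_mem_mul (pow_mem_pow hτ k) ha
  simpa using add_mem hx this

theorem exists_sub_one_mem_and_pow_dvd_pow_mul (hfg : I.FG) (hI : I ≤ span {τ} ⊔ I ^ 2) :
    ∃ r, r - 1 ∈ I ∧ ∀ j, ∀ x ∈ I ^ j, τ ^ j ∣ r ^ j * x := by
  obtain ⟨r, hr1, hr⟩ := Submodule.exists_sub_one_mem_and_smul_le_of_fg_of_le_sup hfg le_rfl
    (by rwa [smul_eq_mul, ← pow_two])
  have hrI : span {r} * I ≤ span {τ} := span_singleton_mul_le_iff.mpr fun x hx =>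
    hr (Submodule.smul_mem_pointwise_smul x r I hx)
  refine ⟨r, hr1, fun j x hx => mem_span_singleton.mp ?_⟩
  have := pow_right_mono hrI j
  rw [mul_pow, span_singleton_pow, span_singleton_pow] at this
  exact this (mul_mem_mul (mem_span_singleton_self _) hx)

theorem exists_mem_pow_and_notMem_pow_succ [IsNoetherianRing R] [IsDomain R] (hI : I ≠ ⊤)
    {x : R} (hx : x ≠ 0) : ∃ k, x ∈ I ^ k ∧ x ∉ I ^ (k + 1) := by
  by_contra! h
  have hall : ∀ k, x ∈ I ^ k := fun k => by
    induction k with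
    | zero => simp
    | succ k ih => exact h k ih
  have : x ∈ ⨅ k, I ^ k := mem_iInf.mpr hall
  rw [iInf_pow_eq_bot_of_isDomain I hI] at this
  exact hx this

end Ideal

namespace Derivation

variable {R A : Type*} [CommSemiring R] [CommRing A] [Algebra R A] (D : Derivation R A A)
  {I : Ideal A}

theorem apply_mem_pow_of_mem_pow_succ {n : ℕ} {x : A} (hx : x ∈ I ^ (n + 1)) : D x ∈ I ^ n := by
  induction n generalizing x with
  | zero => simp
  | succ n ih =>
    rw [pow_succ] at hx
    refine Submodule.mul_induction_on hx (fun a ha b hb => ?_) fun u v hu hv => ?_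
    · rw [leibniz, smul_eq_mul, smul_eq_mul]
      exact add_mem (Ideal.mul_mem_right _ _ ha) (pow_succ' I n ▸ Ideal.mul_mem_mul hb (ih ha))
    · exact D.map_add u v ▸ add_mem hu hv

theorem pow_apply_mem_pow_of_mem_pow_add {k s : ℕ} {x : A} (hx : x ∈ I ^ (k + s)) :
    ((D : Module.End R A) ^ s) x ∈ I ^ k := by
  induction s generalizing x with
  | zero => simpa using hx
  | succ s ih =>
    rw [pow_succ, Module.End.mul_apply]
    exact ih (D.apply_mem_pow_of_mem_pow_succ (by rwa [← add_assoc] at hx))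

end Derivation

section Kaehler

variable {R A : Type*} [CommRing R] [CommRing A] [Algebra R A] {t : A} {d : A →ₗ[R] A}

theorem leibniz_of_kaehlerD_eq_smul
    (hfree : ∀ ω : Ω[A⁄R], ∃! c : A, ω = c • KaehlerDifferential.D R A t)
    (hd : ∀ g, KaehlerDifferential.D R A g = d g • KaehlerDifferential.D R A t) (x y : A) :
    d (x * y) = x • d y + y • d x :=
  (hfree _).unique (hd (x * y)) <| by
    rw [Derivation.leibniz, hd x, hd y, smul_smul, smul_smul, ← add_smul, smul_eq_mul,
      smul_eq_mul]

theorem apply_eq_one_of_kaehlerD_eq_smul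
    (hfree : ∀ ω : Ω[A⁄R], ∃! c : A, ω = c • KaehlerDifferential.D R A t)
    (hd : ∀ g, KaehlerDifferential.D R A g = d g • KaehlerDifferential.D R A t) : d t = 1 :=
  (hfree _).unique (hd t) (one_smul _ _).symm

end Kaehler

namespace AlgHom

variable {R A : Type*} [CommRing R] [CommRing A] [Algebra R A]

theorem sub_algebraMap_mem_ker (η : A →ₐ[R] R) (x : A) :
    x - algebraMap R A (η x) ∈ RingHom.ker η := by
  simp [RingHom.mem_ker]

theorem ker_injective : Function.Injective fun η : A →ₐ[R] R => RingHom.ker η := by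
  intro η η' h
  ext x
  have hx := η.sub_algebraMap_mem_ker x
  simp only at h
  rw [h, RingHom.mem_ker, map_sub, AlgHom.commutes, sub_eq_zero] at hx
  exact hx.symm

def derivationQuotKerSq (η : A →ₐ[R] R) : Derivation R A (A ⧸ RingHom.ker η ^ 2) :=
  Derivation.mk' ((Ideal.Quotient.mkₐ R _).toLinearMap ∘ₗ
      (LinearMap.id - Algebra.linearMap R A ∘ₗ η.toLinearMap)) fun a b => by
    simp only [LinearMap.comp_apply, LinearMap.sub_apply, LinearMap.id_apply,
      Algebra.linearMap_apply, AlgHom.toLinearMap_apply, Ideal.Quotient.mkₐ_eq_mk,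
      Algebra.smul_def]
    rw [Ideal.Quotient.algebraMap_eq, ← map_mul, ← map_mul, ← map_add, Ideal.Quotient.eq,
      pow_two]
    convert neg_mem (Ideal.mul_mem_mul (η.sub_algebraMap_mem_ker a) (η.sub_algebraMap_mem_ker b))
      using 1
    rw [map_mul, map_mul]
    ring

theorem derivationQuotKerSq_apply (η : A →ₐ[R] R) (a : A) :
    η.derivationQuotKerSq a = Ideal.Quotient.mk _ (a - algebraMap R A (η a)) := rfl

theorem ker_le_span_sup_sq (η : A →ₐ[R] R) {t : A} {d : A →ₗ[R] A}
    (hd : ∀ g, KaehlerDifferential.D R A g = d g • KaehlerDifferential.D R A t) :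
    RingHom.ker η ≤ Ideal.span {t - algebraMap R A (η t)} ⊔ RingHom.ker η ^ 2 := by
  intro x hx
  have key : η.derivationQuotKerSq x = d x • η.derivationQuotKerSq t := by
    rw [← Derivation.liftKaehlerDifferential_comp_D, hd, map_smul,
      Derivation.liftKaehlerDifferential_comp_D]
  rw [derivationQuotKerSq_apply, derivationQuotKerSq_apply, RingHom.mem_ker.mp hx, map_zero,
    sub_zero, Algebra.smul_def, Ideal.Quotient.algebraMap_eq, ← map_mul, Ideal.Quotient.eq] at key
  have hdx : (d x - algebraMap R A (η (d x))) * (t - algebraMap R A (η t)) ∈ RingHom.ker η ^ 2 :=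
    pow_two (RingHom.ker η) ▸
      Ideal.mul_mem_mul (η.sub_algebraMap_mem_ker _) (η.sub_algebraMap_mem_ker t)
  exact Submodule.mem_sup.mpr ⟨_, Ideal.mul_mem_left _ (algebraMap R A (η (d x)))
    (Ideal.mem_span_singleton_self _), _, add_mem key hdx, by ring⟩

theorem exists_forall_pow_succ_mul_eq_pow_mul [IsNoetherianRing A] {η : A →ₐ[R] R} {τ : A}
    (hτ : τ ∈ RingHom.ker η) (hI : RingHom.ker η ≤ Ideal.span {τ} ⊔ RingHom.ker η ^ 2) :
    ∃ r, η r = 1 ∧ ∀ k, ∀ x ∈ RingHom.ker η ^ k,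
      ∃ q, r ^ (k + 1) * x = τ ^ k * q ∧ (η q = 0 → x ∈ RingHom.ker η ^ (k + 1)) := by
  obtain ⟨r, hr, hrτ⟩ :=
    Ideal.exists_sub_one_mem_and_pow_dvd_pow_mul (IsNoetherian.noetherian _) hI
  rw [RingHom.mem_ker, map_sub, map_one, sub_eq_zero] at hr
  refine ⟨r, hr, fun k x hx => ?_⟩
  obtain ⟨a, ha⟩ := Ideal.exists_sub_pow_mul_mem_pow_succ hτ hI hx
  obtain ⟨w, hw⟩ := hrτ (k + 1) _ ha
  refine ⟨r ^ (k + 1) * a + τ * w, by linear_combination hw, fun hq =>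
    Ideal.mem_pow_succ_of_sub_pow_mul_mem hτ ha ?_⟩
  simpa [RingHom.mem_ker.mp hτ, hr] using hq

theorem finite_setOf_apply_eq_zero {K : Type*} [Field K] [Algebra K A] [IsNoetherianRing A]
    [IsDomain A] [Ring.KrullDimLE 1 A] {τ : A} (hτ : τ ≠ 0) :
    {ζ : A →ₐ[K] K | ζ τ = 0}.Finite := by
  have hmin : ∀ ζ ∈ {ζ : A →ₐ[K] K | ζ τ = 0},
      RingHom.ker ζ ∈ (Ideal.span {τ}).minimalPrimes := by
    intro ζ hζ
    refine ⟨⟨RingHom.ker_isPrime ζ, (Ideal.span_singleton_le_iff_mem _).mpr hζ⟩,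
      fun q ⟨hq, hτq⟩ hqle => ?_⟩
    have hq0 : q ≠ ⊥ := fun h => hτ (by simpa [h] using hτq (Ideal.mem_span_singleton_self τ))
    exact ((hq.isMaximal_of_ne_bot hq0).eq_of_le (RingHom.ker_ne_top ζ) hqle).ge
  exact Set.Finite.of_finite_image
    ((Ideal.finite_minimalPrimes_of_isNoetherianRing A _).subset (Set.image_subset_iff.mpr hmin))
    ker_injective.injOn

end AlgHom

section Order

variable {A : Type} [CommRing A] [Algebra ℝ A] (D : Derivation ℝ A A) {η : A →ₐ[ℝ] ℝ} {τ : A}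

theorem ordGe_of_mem_pow {k : ℕ} {x : A} (hx : x ∈ RingHom.ker η ^ k) : ordGe D x η k := by
  intro s hs
  obtain ⟨j, rfl⟩ := Nat.exists_eq_add_of_lt hs
  rw [← RingHom.mem_ker]
  exact Ideal.pow_le_self j.succ_ne_zero (D.pow_apply_mem_pow_of_mem_pow_add (k := j + 1)
    (by rwa [show j + 1 + s = s + j + 1 by omega]))

theorem apply_pow_apply_pow_mul (hτ : τ ∈ RingHom.ker η) (hDτ : D τ = 1) (k : ℕ) (a : A) :
    η (((D : Module.End ℝ A) ^ k) (τ ^ k * a)) = k.factorial * η a := by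
  induction k generalizing a with
  | zero => simp
  | succ k ih =>
    have hD : D (τ ^ (k + 1) * a) = τ ^ k * (τ * D a + (k + 1) * a) := by
      rw [D.leibniz, D.leibniz_pow, hDτ]
      simp only [smul_eq_mul, add_tsub_cancel_right, mul_one, nsmul_eq_mul, Nat.cast_add,
        Nat.cast_one]
      ring
    rw [pow_succ, Module.End.mul_apply, Derivation.coeFn_coe, hD, ih, map_add, map_mul, map_mul,
      RingHom.mem_ker.mp hτ, Nat.factorial_succ]
    simp only [zero_mul, map_add, map_natCast, map_one, zero_add, Nat.cast_mul, Nat.cast_add,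
      Nat.cast_one]
    ring

theorem mem_pow_of_ordGe (hτ : τ ∈ RingHom.ker η) (hDτ : D τ = 1)
    (hI : RingHom.ker η ≤ Ideal.span {τ} ⊔ RingHom.ker η ^ 2) {k : ℕ} {x : A}
    (hx : ordGe D x η k) : x ∈ RingHom.ker η ^ k := by
  induction k with
  | zero => simp
  | succ k ih =>
    obtain ⟨a, ha⟩ := Ideal.exists_sub_pow_mul_mem_pow_succ hτ hI (ih fun s hs => hx s (by omega))
    refine Ideal.mem_pow_succ_of_sub_pow_mul_mem hτ ha (RingHom.mem_ker.mpr ?_)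
    have hy := D.pow_apply_mem_pow_of_mem_pow_add (k := 1) (s := k) (by rwa [add_comm])
    rw [pow_one, RingHom.mem_ker, map_sub, map_sub, hx k k.lt_succ_self,
      apply_pow_apply_pow_mul D hτ hDτ, zero_sub, neg_eq_zero, mul_eq_zero] at hy
    exact hy.resolve_left (Nat.cast_ne_zero.mpr k.factorial_ne_zero)

theorem ordGe_iff_mem_pow (hτ : τ ∈ RingHom.ker η) (hDτ : D τ = 1)
    (hI : RingHom.ker η ≤ Ideal.span {τ} ⊔ RingHom.ker η ^ 2) {k : ℕ} {x : A} :
    ordGe D x η k ↔ x ∈ RingHom.ker η ^ k :=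
  ⟨mem_pow_of_ordGe D hτ hDτ hI, ordGe_of_mem_pow D⟩

end Order

theorem IsCompact.exists_pos_bound_of_forall_isBigO {X E F : Type*} [TopologicalSpace X]
    [SeminormedAddCommGroup E] [SeminormedAddCommGroup F] {K : Set X} (hK : IsCompact K)
    {g : X → E} {f : X → F} (h : ∀ x ∈ K, g =O[𝓝[K] x] f) :
    ∃ C > 0, ∀ x ∈ K, ‖g x‖ ≤ C * ‖f x‖ := by
  refine hK.induction_on (p := fun s => ∃ C > 0, ∀ x ∈ s, ‖g x‖ ≤ C * ‖f x‖)
    ⟨1, one_pos, by simp⟩ (fun s t hst ⟨C, hC, ht⟩ => ⟨C, hC, fun x hx => ht x (hst hx)⟩)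
    (fun s t ⟨C, hC, hs⟩ ⟨C', _, ht⟩ => ⟨max C C', lt_max_of_lt_left hC, ?_⟩) fun x hx => ?_
  · rintro x (hx | hx)
    · exact (hs x hx).trans (mul_le_mul_of_nonneg_right (le_max_left C C') (norm_nonneg _))
    · exact (ht x hx).trans (mul_le_mul_of_nonneg_right (le_max_right C C') (norm_nonneg _))
  · obtain ⟨C, hC, hCx⟩ := (h x hx).exists_pos
    exact ⟨_, hCx.bound, C, hC, fun y hy => hy⟩

section Evaluation

variable {A : Type*} [CommRing A] [Algebra ℝ A] {S : Set (A →ₐ[ℝ] ℝ)} {η₀ : A →ₐ[ℝ] ℝ}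

theorem eventuallyEq_mul_div_nhdsWithin {s u f g qf qg : A} (hf : s * f = u * qf)
    (hg : s * g = u * qg) (hs : η₀ s ≠ 0) (hqf : η₀ qf ≠ 0) :
    (fun x : A → ℝ => x g) =ᶠ[𝓝[(⇑) '' S] ⇑η₀] fun x => x f * (x qg / x qf) := by
  have hne : ∀ a : A, η₀ a ≠ 0 → ∀ᶠ x in 𝓝[(⇑) '' S] (⇑η₀ : A → ℝ), x a ≠ 0 := fun a ha =>
    nhdsWithin_le_nhds ((continuous_apply a).continuousAt.eventually_ne ha)
  filter_upwards [hne s hs, hne qf hqf, self_mem_nhdsWithin] with x hxs hxq hxS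
  obtain ⟨η, -, rfl⟩ := hxS
  have hf' := congrArg η hf
  have hg' := congrArg η hg
  simp only [map_mul] at hf' hg'
  rw [mul_div_assoc', eq_div_iff hxq]
  refine mul_left_cancel₀ hxs ?_
  linear_combination η qf * hg' - η qg * hf'

theorem tendsto_div_nhdsWithin {qf qg : A} (hqf : η₀ qf ≠ 0) :
    Tendsto (fun x : A → ℝ => x qg / x qf) (𝓝[(⇑) '' S] ⇑η₀) (𝓝 (η₀ qg / η₀ qf)) :=
  ((continuous_apply qg).continuousAt.div (continuous_apply qf).continuousAt hqf).tendsto.mono_left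
    nhdsWithin_le_nhds

theorem isBigO_nhdsWithin_of_mul_eq {s u f g qf qg : A} (hf : s * f = u * qf)
    (hg : s * g = u * qg) (hs : η₀ s ≠ 0) (hqf : η₀ qf ≠ 0) :
    (fun x : A → ℝ => x g) =O[𝓝[(⇑) '' S] ⇑η₀] fun x => x f := by
  refine ((isBigO_refl _ _).mul (isBigO_const_of_tendsto (tendsto_div_nhdsWithin hqf)
    one_ne_zero)).congr' (eventuallyEq_mul_div_nhdsWithin hf hg hs hqf).symm ?_
  simp

theorem isLittleO_nhdsWithin_of_mul_eq {s u f g qf qg : A} (hf : s * f = u * qf)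
    (hg : s * g = u * qg) (hs : η₀ s ≠ 0) (hqf : η₀ qf ≠ 0) (hqg : η₀ qg = 0) :
    (fun x : A → ℝ => x g) =o[𝓝[(⇑) '' S] ⇑η₀] fun x => x f := by
  have h := tendsto_div_nhdsWithin (S := S) (qg := qg) hqf
  rw [hqg, zero_div, ← isLittleO_one_iff ℝ] at h
  refine ((isBigO_refl _ _).mul_isLittleO h).congr'
    (eventuallyEq_mul_div_nhdsWithin hf hg hs hqf).symm ?_
  simp

theorem eventually_apply_ne_zero_of_mul_eq {τ s p q : A} {k : ℕ}
    (hfin : {ζ : A →ₐ[ℝ] ℝ | ζ τ = 0}.Finite) (h : s * p = τ ^ k * q) (hq : η₀ q ≠ 0) :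
    ∀ᶠ x in 𝓝[(⇑) '' S \ {⇑η₀}] (⇑η₀ : A → ℝ), x p ≠ 0 := by
  have hF : ((⇑) '' {ζ : A →ₐ[ℝ] ℝ | ζ τ = 0} \ {⇑η₀})ᶜ ∈ 𝓝 (⇑η₀ : A → ℝ) :=
    (hfin.image _).sdiff.isClosed.compl_mem_nhds (by simp)
  filter_upwards [nhdsWithin_le_nhds hF,
    nhdsWithin_le_nhds ((continuous_apply q).continuousAt.eventually_ne hq),
    self_mem_nhdsWithin] with x hxF hxq hxS hxp
  obtain ⟨⟨η, -, rfl⟩, hne⟩ := hxS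
  have hητ : η τ ≠ 0 := fun h0 => hxF ⟨⟨η, h0, rfl⟩, hne⟩
  have h' := congrArg η h
  rw [map_mul, map_mul, map_pow, hxp, mul_zero] at h'
  exact mul_ne_zero (pow_ne_zero k hητ) hxq h'.symm

variable [IsNoetherianRing A] [IsDomain A] {τ : A}

theorem isBigO_nhdsWithin_of_forall_mem_pow (hτ : τ ∈ RingHom.ker η₀)
    (hI : RingHom.ker η₀ ≤ Ideal.span {τ} ⊔ RingHom.ker η₀ ^ 2) {f g : A} (hf : f ≠ 0)
    (hfg : ∀ k, f ∈ RingHom.ker η₀ ^ k → g ∈ RingHom.ker η₀ ^ k) :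
    (fun x : A → ℝ => x g) =O[𝓝[(⇑) '' S] ⇑η₀] fun x => x f := by
  obtain ⟨r, hr, hfactor⟩ := AlgHom.exists_forall_pow_succ_mul_eq_pow_mul hτ hI
  obtain ⟨k, hfk, hfk1⟩ := Ideal.exists_mem_pow_and_notMem_pow_succ (RingHom.ker_ne_top η₀) hf
  obtain ⟨qf, hqf, hqf0⟩ := hfactor k f hfk
  obtain ⟨qg, hqg, -⟩ := hfactor k g (hfg k hfk)
  exact isBigO_nhdsWithin_of_mul_eq hqf hqg (by simp [hr]) (mt hqf0 hfk1)

theorem mem_pow_of_nonneg_of_le [Ring.KrullDimLE 1 A] (hτ : τ ∈ RingHom.ker η₀) (hτ0 : τ ≠ 0)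
    (hI : RingHom.ker η₀ ≤ Ideal.span {τ} ⊔ RingHom.ker η₀ ^ 2)
    (hacc : (𝓝[(⇑) '' S \ {⇑η₀}] (⇑η₀ : A → ℝ)).NeBot) {p f : A} (hp : ∀ η ∈ S, 0 ≤ η p)
    (hpf : ∀ η ∈ S, η p ≤ η f) {j : ℕ} (hf : f ∈ RingHom.ker η₀ ^ j) :
    p ∈ RingHom.ker η₀ ^ j := by
  by_contra hpj
  obtain ⟨k, hpk, hpk1⟩ := Ideal.exists_mem_pow_and_notMem_pow_succ (RingHom.ker_ne_top η₀)
    (show p ≠ 0 by rintro rfl; exact hpj (zero_mem _))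
  have hkj : k + 1 ≤ j := by
    by_contra! h
    exact hpj (Ideal.pow_le_pow_right (by omega) hpk)
  obtain ⟨r, hr, hfactor⟩ := AlgHom.exists_forall_pow_succ_mul_eq_pow_mul hτ hI
  obtain ⟨qp, hqp, hqp0⟩ := hfactor k p hpk
  obtain ⟨w, hw, -⟩ := hfactor (k + 1) f (Ideal.pow_le_pow_right hkj hf)
  have hfp : (fun x : A → ℝ => x f) =o[𝓝[(⇑) '' S] ⇑η₀] fun x => x p :=
    isLittleO_nhdsWithin_of_mul_eq (s := r ^ (k + 2)) (u := τ ^ k) (qf := r * qp) (qg := τ * w)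
      (by linear_combination r * hqp) (by linear_combination hw) (by simp [hr])
      (by simpa [hr] using mt hqp0 hpk1) (by simp [RingHom.mem_ker.mp hτ])
  have hpf : (fun x : A → ℝ => x p) =O[𝓝[(⇑) '' S \ {⇑η₀}] ⇑η₀] fun x => x f :=
    IsBigO.of_bound' <| by
      filter_upwards [self_mem_nhdsWithin] with x hx
      obtain ⟨⟨η, hη, rfl⟩, -⟩ := hx
      simpa [abs_of_nonneg (hp η hη), abs_of_nonneg ((hp η hη).trans (hpf η hη))] using hpf η hη
  refine isLittleO_irrefl ?_ (hpf.trans_isLittleO (hfp.mono (nhdsWithin_mono _ Set.sdiff_subset)))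
  exact (eventually_apply_ne_zero_of_mul_eq (AlgHom.finite_setOf_apply_eq_zero hτ0) hqp
    (mt hqp0 hpk1)).frequently

end Evaluation

section Face

variable {A : Type*} [CommRing A] [Algebra ℝ A]

def nonnegCone (V : Submodule ℝ A) (S : Set (A →ₐ[ℝ] ℝ)) : Set A :=
  {g | g ∈ V ∧ ∀ η ∈ S, 0 ≤ η g}

variable {V : Submodule ℝ A} {S : Set (A →ₐ[ℝ] ℝ)} {f g : A}

theorem half_add_mem_nonnegCone (hf : f ∈ V) (hg : g ∈ V) (hgf : ∀ η ∈ S, |η g| ≤ η f) :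
    (2⁻¹ : ℝ) • (f + g) ∈ nonnegCone V S :=
  ⟨V.smul_mem _ (V.add_mem hf hg), fun η hη => by
    rw [map_smul, map_add, smul_eq_mul]
    linarith [neg_abs_le (η g), hgf η hη]⟩

theorem mem_span_face_of_abs_le {C : ℝ} (hC : 0 < C) (hf : f ∈ V) (hg : g ∈ V)
    (hgf : ∀ η ∈ S, |η g| ≤ C * η f) :
    g ∈ Submodule.span ℝ {p | p ∈ nonnegCone V S ∧ f - p ∈ nonnegCone V S} := by
  have hface : ∀ h ∈ V, (∀ η ∈ S, |η h| ≤ η f) →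
      (2⁻¹ : ℝ) • (f + h) ∈ {p | p ∈ nonnegCone V S ∧ f - p ∈ nonnegCone V S} :=
    fun h hV hb => ⟨half_add_mem_nonnegCone hf hV hb, by
      rw [show f - (2⁻¹ : ℝ) • (f + h) = (2⁻¹ : ℝ) • (f + -h) by module]
      exact half_add_mem_nonnegCone hf (V.neg_mem hV) (by simpa using hb)⟩
  have hb : ∀ η ∈ S, |η (C⁻¹ • g)| ≤ η f := fun η hη => by
    rw [map_smul, smul_eq_mul, abs_mul, abs_of_pos (inv_pos.mpr hC), inv_mul_le_iff₀ hC]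
    exact hgf η hη
  have hg' : g = C • ((2⁻¹ : ℝ) • (f + C⁻¹ • g) - (2⁻¹ : ℝ) • (f + -(C⁻¹ • g))) := by
    match_scalars <;> field_simp <;> ring
  rw [hg']
  exact Submodule.smul_mem _ _ (Submodule.sub_mem _
    (Submodule.subset_span (hface _ (V.smul_mem _ hg) hb))
    (Submodule.subset_span (hface _ (V.neg_mem (V.smul_mem _ hg)) (by simpa using hb))))

end Face

theorem stmt18_general (A : Type) [CommRing A] [IsDomain A] [Algebra ℝ A]
    [Algebra.FiniteType ℝ A]
    (hdim : ringKrullDim A = 1)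
    (t : A)
    (hfree : ∀ ω : Ω[A⁄ℝ], ∃! c : A, ω = c • KaehlerDifferential.D ℝ A t)
    (d : Module.End ℝ A)
    (hd : ∀ g : A, KaehlerDifferential.D ℝ A g =
      d g • KaehlerDifferential.D ℝ A t)
    (S : Set (A →ₐ[ℝ] ℝ))
    (hScpt : IsCompact ((fun η : A →ₐ[ℝ] ℝ => (η : A → ℝ)) '' S))
    (hSnoiso : ∀ x ∈ (fun η : A →ₐ[ℝ] ℝ => (η : A → ℝ)) '' S,
      x ∈ closure (((fun η : A →ₐ[ℝ] ℝ => (η : A → ℝ)) '' S) \ {x}))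
    (V : Submodule ℝ A)
    (P : Set A) (hP : P = {g : A | g ∈ V ∧ ∀ η ∈ S, 0 ≤ η g})
    (f : A) (hf : f ∈ P) (hf0 : f ≠ 0) :
    Submodule.span ℝ {p : A | p ∈ P ∧ f - p ∈ P} =
      Submodule.span ℝ {g : A | g ∈ V ∧
        ∀ η ∈ S, ∀ m : ℕ, ordGe d f η m → ordGe d g η m} := by
  have : IsNoetherianRing A := Algebra.FiniteType.isNoetherianRing ℝ A
  have : Ring.KrullDimLE 1 A := Ring.krullDimLE_iff.mpr hdim.le
  obtain ⟨D, rfl⟩ : ∃ D : Derivation ℝ A A, ↑D = d :=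
    ⟨Derivation.mk' d (leibniz_of_kaehlerD_eq_smul hfree hd), rfl⟩
  have hτ (η : A →ₐ[ℝ] ℝ) := η.sub_algebraMap_mem_ker t
  have hI (η : A →ₐ[ℝ] ℝ) := η.ker_le_span_sup_sq hd
  have hDτ (η : A →ₐ[ℝ] ℝ) : D (t - algebraMap ℝ A (η t)) = 1 := by
    simpa using apply_eq_one_of_kaehlerD_eq_smul hfree hd
  have hord (η : A →ₐ[ℝ] ℝ) (x : A) (k : ℕ) : ordGe D x η k ↔ x ∈ RingHom.ker η ^ k :=
    ordGe_iff_mem_pow D (hτ η) (hDτ η) (hI η)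
  obtain rfl : P = nonnegCone V S := hP
  apply le_antisymm
  · refine Submodule.span_mono fun p ⟨⟨hpV, hpS⟩, _, hfpS⟩ => ⟨hpV, fun η hη m => ?_⟩
    simp only [hord]
    exact mem_pow_of_nonneg_of_le (hτ η) (fun h => by simpa [h] using hDτ η) (hI η)
      (mem_closure_iff_nhdsWithin_neBot.mp (hSnoiso _ ⟨η, hη, rfl⟩)) hpS
      (fun η hη => by simpa using hfpS η hη)
  · rw [Submodule.span_le]
    rintro g ⟨hgV, hg⟩
    obtain ⟨C, hC, hCg⟩ := hScpt.exists_pos_bound_of_forall_isBigO (g := fun x => x g)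
      (f := fun x => x f) fun _ ⟨η, hη, hx⟩ => hx ▸
        isBigO_nhdsWithin_of_forall_mem_pow (hτ η) (hI η) hf0 fun k => by
          simpa only [hord] using hg η hη k
    exact mem_span_face_of_abs_le hC hf.1 hgV fun η hη => by
      simpa [abs_of_nonneg (hf.2 η hη)] using hCg _ ⟨η, hη, rfl⟩

/-- Let `C` be an irreducible non-singular affine curve over `ℝ`, `S ⊆ C(ℝ)`
compact without isolated points, `V ⊆ ℝ[C]` of dimension `n+1`, and
`P = {f ∈ V : f|_S ≥ 0}`.  For `0 ≠ f ∈ P`, the linear span of the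
supporting face `F_f = {p ∈ P : f - p ∈ P}` equals
`V_f = {g ∈ V : ord_η(g) ≥ ord_η(f) for all η ∈ S}`. -/
theorem stmt18 (A : Type) [CommRing A] [IsDomain A] [Algebra ℝ A]
    [Algebra.FiniteType ℝ A] [Algebra.Smooth ℝ A]
    (hdim : ringKrullDim A = 1)
    (t : A)
    (hfree : ∀ ω : Ω[A⁄ℝ], ∃! c : A, ω = c • KaehlerDifferential.D ℝ A t)
    (d : Module.End ℝ A)
    (hd : ∀ g : A, KaehlerDifferential.D ℝ A g =
      d g • KaehlerDifferential.D ℝ A t)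
    (S : Set (A →ₐ[ℝ] ℝ))
    (hScpt : IsCompact ((fun η : A →ₐ[ℝ] ℝ => (η : A → ℝ)) '' S))
    (hSnoiso : ∀ x ∈ (fun η : A →ₐ[ℝ] ℝ => (η : A → ℝ)) '' S,
      x ∈ closure (((fun η : A →ₐ[ℝ] ℝ => (η : A → ℝ)) '' S) \ {x}))
    (hSne : S.Nonempty)
    (n : ℕ) (V : Submodule ℝ A) (hV : Module.finrank ℝ V = n + 1)
    (P : Set A) (hP : P = {g : A | g ∈ V ∧ ∀ η ∈ S, 0 ≤ η g})
    (f : A) (hf : f ∈ P) (hf0 : f ≠ 0) :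
    Submodule.span ℝ {p : A | p ∈ P ∧ f - p ∈ P} =
      Submodule.span ℝ {g : A | g ∈ V ∧
        ∀ η ∈ S, ∀ m : ℕ, ordGe d f η m → ordGe d g η m} :=
  stmt18_general A hdim t hfree d hd S hScpt hSnoiso V P hP f hf hf0
end
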